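/- For every natural number n, the n-ary generalized C combinator admits the alternative encoding C_n =βη (S (S (K S) (S (K K) S_n)) (K K_n)). -/

import Mathlib

namespace LC

/-- Untyped λ-terms, de Bruijn indices. -/
inductive Tm : Type
  | var : ℕ → Tm
  | app : Tm → Tm → Tm
  | lam : Tm → Tm
  deriving DecidableEq

namespace Tm

/-- Shift the free variables ≥ c up by one. -/
def lift (c : ℕ) : Tm → Tm
  | var n => if n < c then var n else var (n + 1)
  | app a b => app (lift c a) (lift c b)
  | lam a => lam (lift (c + 1) a)

/-- Substitute `s` for the free variable `k`. -/
def subst (k : ℕ) (s : Tm) : Tm → Tm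
  | var n => if n = k then s else if k < n then var (n - 1) else var n
  | app a b => app (subst k s a) (subst k s b)
  | lam a => lam (subst (k + 1) (lift 0 s) a)

/-- One-step βη-reduction (with congruence closure). -/
inductive Step : Tm → Tm → Prop
  | beta (a b : Tm) : Step (app (lam a) b) (subst 0 b a)
  | eta (a : Tm) : Step (lam (app (lift 0 a) (var 0))) a
  | appL {a a' : Tm} (b : Tm) : Step a a' → Step (app a b) (app a' b)
  | appR (a : Tm) {b b' : Tm} : Step b b' → Step (app a b) (app a b')
  | lamCongr {a a' : Tm} : Step a a' → Step (lam a) (lam a')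

/-- βη-equivalence: the equivalence relation generated by βη-reduction. -/
def BetaEta : Tm → Tm → Prop := Relation.EqvGen Step

/-- Multi-step βη-reduction: reflexive-transitive closure of βη-reduction. -/
def Reduces : Tm → Tm → Prop := Relation.ReflTransGen Step

/-- I = λx.x -/
def I : Tm := lam (var 0)
/-- K = λxy.x -/
def K : Tm := lam (lam (var 1))
/-- B = λxyz.(x (y z)) -/
def B : Tm := lam (lam (lam (app (var 2) (app (var 1) (var 0)))))
/-- C = λxyz.(x z y) -/
def C : Tm := lam (lam (lam (app (app (var 2) (var 0)) (var 1))))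
/-- S = λxyz.(x z (y z)) -/
def S : Tm := lam (lam (lam (app (app (var 2) (var 0)) (app (var 1) (var 0)))))

/-- body of the n-th Church numeral: s (s ⋯ (s z)⋯), n times. -/
def churchBody : ℕ → Tm
  | 0 => var 0
  | n + 1 => app (var 1) (churchBody n)

/-- The n-th Church numeral c_n = λsz.(s (s ⋯ (s z)⋯)). -/
def church (n : ℕ) : Tm := lam (lam (churchBody n))

/-- n nested λ-abstractions. -/
def lamN : ℕ → Tm → Tm
  | 0, t => t
  | n + 1, t => lam (lamN n t)

/-- Shift all free variables up by n. -/
def liftN (n : ℕ) (t : Tm) : Tm := (lift 0)^[n] t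

/-- t (var (a+k-1)) ⋯ (var (a+1)) (var a) : left-associated application of t
to k variables with descending indices. -/
def appVars (t : Tm) (a k : ℕ) : Tm :=
  ((List.range k).reverse).foldl (fun s i => app s (var (a + i))) t

/-- t (var a) (var (a+1)) ⋯ (var (a+k-1)) : left-associated application of t
to k variables with ascending indices. -/
def appVarsAsc (t : Tm) (a k : ℕ) : Tm :=
  (List.range k).foldl (fun s i => app s (var (a + i))) t

/-- Left-associated application of t to a list of terms. -/
def appList (t : Tm) (l : List Tm) : Tm := l.foldl app t

/-- K_n = λp x_1…x_n. p -/
def Kn (n : ℕ) : Tm := lamN (n + 1) (var n)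
/-- S_n = λpq x_1…x_n.(p x_1⋯x_n (q x_1⋯x_n)) -/
def Sn (n : ℕ) : Tm :=
  lamN (n + 2) (app (appVars (var (n + 1)) 0 n) (appVars (var n) 0 n))
/-- B_n = λpq x_1…x_n.(p (q x_1⋯x_n)) -/
def Bn (n : ℕ) : Tm := lamN (n + 2) (app (var (n + 1)) (appVars (var n) 0 n))
/-- C_n = λpq x_1…x_n.(p x_1⋯x_n q) -/
def Cn (n : ℕ) : Tm := lamN (n + 2) (app (appVars (var (n + 1)) 0 n) (var n))


/-!
No η-step is needed. Reducing under the two leading abstractions, the combinator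
`S (S (K S) (S (K K) s)) (K k)` β-reduces to `λ p q. s p (k q)`; for `s = S_n`, `k = K_n` this is
`λ p q x₁ … xₙ. p x₁ ⋯ xₙ (K_n q x₁ ⋯ xₙ)`, and `K_n q x₁ ⋯ xₙ` β-reduces to `q`, leaving `C_n`.
-/

local infix:50 " ⟶* " => Reduces

lemma lift_lift_of_le {i c : ℕ} (h : i ≤ c) (t : Tm) :
    lift (c + 1) (lift i t) = lift i (lift c t) := by
  induction t generalizing i c with
  | var n => by_cases hn : n < c <;> by_cases hi : n < i <;> simp [lift, *] <;> omega
  | app a b iha ihb => simp [lift, iha h, ihb h]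
  | lam a ih => simp [lift, ih (Nat.succ_le_succ h)]

@[simp] lemma subst_lift (k : ℕ) (s t : Tm) : subst k s (lift k t) = t := by
  induction t generalizing k s with
  | var n =>
    by_cases hn : n < k
    · simp [lift, subst, hn, hn.ne, not_lt.mpr hn.le]
    · simp only [lift, if_neg hn, subst, if_neg (show n + 1 ≠ k by omega),
        if_pos (show k < n + 1 by omega), Nat.add_sub_cancel]
  | app a b iha ihb => simp [lift, subst, iha, ihb]
  | lam a ih => simp [lift, subst, ih]

lemma liftN_succ (m : ℕ) (t : Tm) : liftN (m + 1) t = lift 0 (liftN m t) :=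
  Function.iterate_succ_apply' _ _ _

lemma lift_liftN (m : ℕ) (t : Tm) : lift m (liftN m t) = liftN (m + 1) t := by
  induction m with
  | zero => rfl
  | succ m ih => rw [liftN_succ, lift_lift_of_le (Nat.zero_le m), ih, ← liftN_succ]

lemma liftN_var (m j : ℕ) : liftN m (var j) = var (j + m) := by
  induction m with
  | zero => rfl
  | succ m ih => simp [liftN_succ, ih, lift, Nat.add_assoc]

lemma liftN_app (m : ℕ) (a b : Tm) : liftN m (app a b) = app (liftN m a) (liftN m b) := by
  induction m with
  | zero => rfl
  | succ m ih => simp [liftN_succ, ih, lift]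

lemma lift_lamN (c m : ℕ) (t : Tm) : lift c (lamN m t) = lamN m (lift (c + m) t) := by
  induction m generalizing c with
  | zero => rfl
  | succ m ih => simp [lamN, lift, ih, Nat.add_assoc, Nat.add_comm 1 m]

lemma subst_lamN (k m : ℕ) (s t : Tm) :
    subst k s (lamN m t) = lamN m (subst (k + m) (liftN m s) t) := by
  induction m generalizing k s with
  | zero => rfl
  | succ m ih =>
    simp only [lamN, subst, ih, Nat.add_assoc, Nat.add_comm 1 m]
    rfl

lemma appVars_succ (t : Tm) (a m : ℕ) :
    appVars t a (m + 1) = appVars (app t (var (a + m))) a m := by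
  simp [appVars, List.range_succ]

lemma lift_appVars {c a m : ℕ} (h : a + m ≤ c) (t : Tm) :
    lift c (appVars t a m) = appVars (lift c t) a m := by
  induction m generalizing t with
  | zero => rfl
  | succ m ih => simp [appVars_succ, ih (by omega : a + m ≤ c), lift, (by omega : a + m < c)]

lemma subst_appVars {k a m : ℕ} (h : a + m ≤ k) (s t : Tm) :
    subst k s (appVars t a m) = appVars (subst k s t) a m := by
  induction m generalizing t with
  | zero => rfl
  | succ m ih =>
    simp only [appVars_succ, ih (by omega : a + m ≤ k), subst, if_neg (show a + m ≠ k by omega),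
      if_neg (show ¬ k < a + m by omega)]

@[simp] lemma lift_S (c : ℕ) : lift c S = S := by
  simp [S, lift]

@[simp] lemma lift_K (c : ℕ) : lift c K = K := by
  simp [K, lift]

@[simp] lemma lift_Kn (c n : ℕ) : lift c (Kn n) = Kn n := by
  simp [Kn, lift_lamN, lift, (by omega : n < c + (n + 1))]

@[simp] lemma lift_Sn (c n : ℕ) : lift c (Sn n) = Sn n := by
  simp [Sn, lift_lamN, lift, lift_appVars (by omega : 0 + n ≤ c + (n + 2)),
    (by omega : n < c + (n + 2)), (by omega : n + 1 < c + (n + 2))]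

lemma liftN_Kn (m n : ℕ) : liftN m (Kn n) = Kn n :=
  Function.iterate_fixed (lift_Kn 0 n) m

lemma liftN_Sn (m n : ℕ) : liftN m (Sn n) = Sn n :=
  Function.iterate_fixed (lift_Sn 0 n) m

namespace Reduces

lemma beta {a b c : Tm} (h : subst 0 b a = c) : app (lam a) b ⟶* c :=
  .single (h ▸ Step.beta a b)

lemma app_left {a a' : Tm} (b : Tm) (h : a ⟶* a') : app a b ⟶* app a' b :=
  Relation.ReflTransGen.lift (app · b) (fun _ _ ↦ Step.appL b) _ _ h

lemma app_right (a : Tm) {b b' : Tm} (h : b ⟶* b') : app a b ⟶* app a b' :=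
  Relation.ReflTransGen.lift (app a) (fun _ _ ↦ Step.appR a) _ _ h

lemma lam {a a' : Tm} (h : a ⟶* a') : lam a ⟶* lam a' :=
  Relation.ReflTransGen.lift Tm.lam (fun _ _ ↦ Step.lamCongr) _ _ h

lemma lamN (m : ℕ) {a a' : Tm} (h : a ⟶* a') : lamN m a ⟶* lamN m a' := by
  induction m with
  | zero => exact h
  | succ m ih => exact ih.lam

lemma appVars {t t' : Tm} (a m : ℕ) (h : t ⟶* t') : appVars t a m ⟶* appVars t' a m := by
  induction m generalizing t t' with
  | zero => exact h
  | succ m ih => simpa only [appVars_succ] using ih (h.app_left _)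

lemma betaEta {a b : Tm} (h : a ⟶* b) : BetaEta a b :=
  Relation.EqvGen.reflTransGen_le_eqvGen Step _ _ h

end Reduces

instance : Trans Reduces Reduces Reduces := ⟨Relation.ReflTransGen.trans⟩

lemma K_app_app_reduces (a b : Tm) : app (app K a) b ⟶* a :=
  calc app (app K a) b ⟶* app (lam (lift 0 a)) b := (Reduces.beta (by simp [subst])).app_left _
    _ ⟶* a := Reduces.beta (subst_lift 0 b a)

lemma S_app_app_reduces (a b : Tm) :
    app (app S a) b ⟶* lam (app (app (lift 0 a) (var 0)) (app (lift 0 b) (var 0))) := by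
  have h : lift 0 (lift 0 a) = lift 1 (lift 0 a) := (lift_lift_of_le le_rfl a).symm
  calc app (app S a) b
      ⟶* app (lam (lam (app (app (lift 0 (lift 0 a)) (var 0)) (app (var 1) (var 0))))) b :=
        (Reduces.beta (by simp [subst])).app_left _
    _ ⟶* _ := Reduces.beta (by simp [subst, h])

lemma S_app_app_app_reduces (a b c : Tm) : app (app (app S a) b) c ⟶* app (app a c) (app b c) :=
  calc app (app (app S a) b) c
      ⟶* app (lam (app (app (lift 0 a) (var 0)) (app (lift 0 b) (var 0)))) c :=
        (S_app_app_reduces a b).app_left _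
    _ ⟶* _ := Reduces.beta (by simp [subst])

lemma S_SKS_SKK_K_reduces (s k : Tm) :
    app (app S (app (app S (app K S)) (app (app S (app K K)) s))) (app K k)
      ⟶* lam (lam (app (app (liftN 2 s) (var 1)) (app (liftN 2 k) (var 0)))) := by
  have inner : app (app (app (app S (app K S)) (app (app S (app K K)) (lift 0 s))) (var 0))
      (app (app K (lift 0 k)) (var 0)) ⟶* app (app S (app K (app (lift 0 s) (var 0)))) (lift 0 k) :=
    calc _ ⟶* app (app (app (app K S) (var 0)) (app (app (app S (app K K)) (lift 0 s)) (var 0)))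
          (app (app K (lift 0 k)) (var 0)) := (S_app_app_app_reduces _ _ _).app_left _
      _ ⟶* app (app S (app (app (app S (app K K)) (lift 0 s)) (var 0)))
          (app (app K (lift 0 k)) (var 0)) := ((K_app_app_reduces _ _).app_left _).app_left _
      _ ⟶* app (app S (app (app (app K K) (var 0)) (app (lift 0 s) (var 0))))
          (app (app K (lift 0 k)) (var 0)) := ((S_app_app_app_reduces _ _ _).app_right _).app_left _
      _ ⟶* app (app S (app K (app (lift 0 s) (var 0)))) (app (app K (lift 0 k)) (var 0)) :=
          ((((K_app_app_reduces _ _).app_left _).app_right _).app_left _)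
      _ ⟶* _ := (K_app_app_reduces _ _).app_right _
  calc _ ⟶* lam (app (app (app (app S (app K S)) (app (app S (app K K)) (lift 0 s))) (var 0))
          (app (app K (lift 0 k)) (var 0))) := by
        simpa only [lift, lift_S, lift_K] using
          S_app_app_reduces (app (app S (app K S)) (app (app S (app K K)) s)) (app K k)
    _ ⟶* lam (app (app S (app K (app (lift 0 s) (var 0)))) (lift 0 k)) := inner.lam
    _ ⟶* lam (lam (app (app (app K (app (lift 0 (lift 0 s)) (var 1))) (var 0))
          (app (lift 0 (lift 0 k)) (var 0)))) := by
        simpa only [lift, lift_K, Nat.lt_irrefl, if_false] using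
          (S_app_app_reduces (app K (app (lift 0 s) (var 0))) (lift 0 k)).lam
    _ ⟶* _ := ((K_app_app_reduces _ _).app_left _).lam.lam

lemma appVars_lamN_liftN_reduces (m a : ℕ) (c : Tm) : appVars (lamN m (liftN m c)) a m ⟶* c := by
  induction m with
  | zero => exact .refl
  | succ m ih =>
    rw [appVars_succ]
    refine .trans (Reduces.appVars a m (Reduces.beta ?_)) ih
    rw [subst_lamN, ← lift_liftN, Nat.zero_add, subst_lift]

lemma Kn_app_reduces (n : ℕ) (c : Tm) : app (Kn n) c ⟶* lamN n (liftN n c) :=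
  Reduces.beta (by simp [subst_lamN, subst])

lemma Sn_app_app_reduces (n : ℕ) (a b : Tm) :
    app (app (Sn n) a) b ⟶* lamN n (app (appVars (liftN n a) 0 n) (appVars (liftN n b) 0 n)) := by
  have hSn : Sn n = lam (lamN (n + 1) (app (appVars (var (n + 1)) 0 n) (appVars (var n) 0 n))) :=
    rfl
  calc app (app (Sn n) a) b
      ⟶* app (lam (lamN n (app (appVars (liftN (n + 1) a) 0 n) (appVars (var n) 0 n)))) b := by
        refine hSn ▸ (Reduces.beta ?_).app_left _
        rw [subst_lamN, Nat.zero_add]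
        simp only [subst, subst_appVars (by omega : 0 + n ≤ n + 1),
          if_neg (show n ≠ n + 1 by omega), if_neg (show ¬ n + 1 < n by omega)]
        rfl
    _ ⟶* _ := Reduces.beta (by
        simp [subst_lamN, subst, subst_appVars (by omega : 0 + n ≤ n), ← lift_liftN])

lemma Sn_app_Kn_app_reduces (n : ℕ) (p q : Tm) :
    app (app (Sn n) p) (app (Kn n) q) ⟶* lamN n (app (appVars (liftN n p) 0 n) (liftN n q)) :=
  calc _ ⟶* lamN n (app (appVars (liftN n p) 0 n) (appVars (app (Kn n) (liftN n q)) 0 n)) := by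
        simpa only [liftN_app, liftN_Kn] using Sn_app_app_reduces n p (app (Kn n) q)
    _ ⟶* lamN n (app (appVars (liftN n p) 0 n) (appVars (lamN n (liftN n (liftN n q))) 0 n)) :=
        Reduces.lamN n ((Reduces.appVars 0 n (Kn_app_reduces n _)).app_right _)
    _ ⟶* _ := Reduces.lamN n ((appVars_lamN_liftN_reduces n 0 _).app_right _)

/-- C_n =βη (S (S (K S) (S (K K) S_n)) (K K_n)). -/
theorem Cn_alt_encoding (n : ℕ) :
    BetaEta (Cn n)
      (app (app S (app (app S (app K S)) (app (app S (app K K)) (Sn n))))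
        (app K (Kn n))) := by
  have hCn : Cn n = lam (lam (lamN n (app (appVars (liftN n (var 1)) 0 n) (liftN n (var 0))))) := by
    simp [Cn, lamN, liftN_var, Nat.add_comm 1 n]
  refine Relation.EqvGen.symm _ _ (Reduces.betaEta ?_)
  calc _ ⟶* lam (lam (app (app (Sn n) (var 1)) (app (Kn n) (var 0)))) := by
        simpa only [liftN_Sn, liftN_Kn] using S_SKS_SKK_K_reduces (Sn n) (Kn n)
    _ ⟶* Cn n := hCn ▸ (Sn_app_Kn_app_reduces n _ _).lam.lam

end Tm
end LC
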